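/- arXiv:1109.2359 — 2 statements merged into one kernel-verified Lean document; each statement's English description precedes it below -/
import Mathlib

section
/- For any two weight vectors ω, χ : Fin (n+1) → ℕ with positive coordinates, there exist a finite abelian group G and a continuous action of G on the weighted projective space P(ω) whose orbit space (with the quotient topology) is homeomorphic to P(χ). In other words, any weighted projective space arises as the orbit space of any other of the same dimension under the action of a finite abelian group. -/
noncomputable section

/-- The unit sphere in `ℂ^m` (the sphere `S^{2m-1}`). -/
abbrev Sph (m : ℕ) : Type := {z : Fin m → ℂ // ∑ i, ‖z i‖ ^ 2 = 1}

/-- The relation on the sphere whose quotient is the weighted projective space `P(χ)`: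
`z ∼ w` iff `w = t ·_χ z` for some unimodular `t`. -/
def wRel (m : ℕ) (χ : Fin m → ℕ) (z w : Sph m) : Prop :=
  ∃ t : ℂ, ‖t‖ = 1 ∧ ∀ i, (w : Fin m → ℂ) i = t ^ χ i * (z : Fin m → ℂ) i

/-- The weighted projective space `P(χ)`, with the quotient topology. -/
abbrev WP (m : ℕ) (χ : Fin m → ℕ) : Type := Quot (wRel m χ)

/-- The class `[z]_χ` of a point of the sphere in `P(χ)`. -/
def wpMk (m : ℕ) (χ : Fin m → ℕ) (z : Sph m) : WP m χ := Quot.mk _ z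

/-- `s(χ,ω)`: the least positive integer `s` with `ω i ∣ s * χ i` for all `i`. -/
def sVal (m : ℕ) (χ ω : Fin m → ℕ) : ℕ := sInf {s : ℕ | 0 < s ∧ ∀ i, ω i ∣ s * χ i}

/-- The exponents `d i = s(χ,ω)·χ i/ω i` of the map `e(χ/ω)`. -/
def dExp (m : ℕ) (χ ω : Fin m → ℕ) (i : Fin m) : ℕ := sVal m χ ω * χ i / ω i

/-- `IsNorm m χ v w` says that `w` is the normalisation `N_χ(v)`, i.e. `w` lies on the
sphere and has the form `(λ^{χ_0} v_0, …)` for some real `λ > 0`. -/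
def IsNorm (m : ℕ) (χ : Fin m → ℕ) (v : Fin m → ℂ) (w : Sph m) : Prop :=
  ∃ l : ℝ, 0 < l ∧ ∀ i, (w : Fin m → ℂ) i = (l : ℂ) ^ χ i * v i

/-- Coordinatewise powers of a point of the sphere. -/
def powVec (m : ℕ) (d : Fin m → ℕ) (z : Sph m) : Fin m → ℂ :=
  fun i => (z : Fin m → ℂ) i ^ d i

/-- `IsEMap m χ ω e` says that `e` is the canonical map `e(χ/ω) : P(ω) → P(χ)`:
it is continuous and sends `[z]_ω` to `[N_χ(z_0^{d_0}, …, z_n^{d_n})]_χ`. -/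
def IsEMap (m : ℕ) (χ ω : Fin m → ℕ) (e : WP m ω → WP m χ) : Prop :=
  Continuous e ∧ ∀ z w : Sph m,
    IsNorm m χ (powVec m (dExp m χ ω) z) w → e (wpMk m ω z) = wpMk m χ w

/-- `FiniteGroupQuotientHomeo G X Y` says there is a continuous action of the finite abelian
group `G` on `X` whose orbit space (with the quotient topology) is homeomorphic to `Y`. -/
def FiniteGroupQuotientHomeo (G : Type) [CommGroup G] [Fintype G]
    (X Y : Type) [TopologicalSpace X] [TopologicalSpace Y] : Prop :=
  ∃ a : G → X → X,
    (∀ x, a 1 x = x) ∧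
    (∀ g h x, a (g * h) x = a g (a h x)) ∧
    (∀ g, Continuous (a g)) ∧
    Nonempty (Quot (fun x y => ∃ g : G, a g x = y) ≃ₜ Y)

/-! Put `s = sVal` and `d i = dExp i`, so that `ω i * d i = s * χ i`. The map
`z ↦ z ^ d / ‖z ^ d‖` of the sphere turns `t ·_ω z` into `t ^ s ·_χ (z ^ d / ‖z ^ d‖)`, hence
descends to `P(ω) → P(χ)`. Its fibres are the orbits of `G = ∏ μ_{d i}` acting coordinatewise:
if `z' ^ d` is a positive multiple `c • z ^ d` with `z, z'` on the sphere, comparing norms forces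
`c = 1`, and then `z' i / z i` is a `d i`-th root of unity. So it induces a continuous bijection
`P(ω)/G → P(χ)`, which is a homeomorphism because on the sphere the map is a closed surjection
(the sphere is compact) followed by the quotient map onto `P(χ)`. -/

open Topology Filter Function

variable {m : ℕ}

lemma Sph.exists_ne_zero (z : Sph m) : ∃ i, (z : Fin m → ℂ) i ≠ 0 := by
  by_contra! h
  simpa [h] using z.2

instance : CompactSpace (Sph m) := by
  refine isCompact_iff_compactSpace.mp (Metric.isCompact_of_isClosed_isBounded ?_ ?_)
  · exact isClosed_eq (by fun_prop) continuous_const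
  · refine (Metric.isBounded_closedBall (x := 0) (r := 1)).subset fun z (hz : _ = _) => ?_
    rw [mem_closedBall_zero_iff, pi_norm_le_iff_of_nonneg zero_le_one]
    intro i
    have : ‖z i‖ ^ 2 ≤ 1 :=
      hz ▸ Finset.single_le_sum (fun j _ => sq_nonneg ‖z j‖) (Finset.mem_univ i)
    exact (pow_le_one_iff_of_nonneg (norm_nonneg _) two_ne_zero).1 this

instance : MulAction (Fin m → Circle) (Sph m) where
  smul u z := ⟨u • (z : Fin m → ℂ), by
    change ∑ i, ‖u i • (z : Fin m → ℂ) i‖ ^ 2 = 1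
    simpa only [Circle.norm_smul] using z.2⟩
  one_smul z := Subtype.ext (one_smul _ _)
  mul_smul u v z := Subtype.ext (mul_smul u v _)

lemma Sph.coe_smul (u : Fin m → Circle) (z : Sph m) :
    ((u • z : Sph m) : Fin m → ℂ) = u • (z : Fin m → ℂ) := rfl

instance : ContinuousConstSMul (Fin m → Circle) (Sph m) :=
  ⟨fun u => ((continuous_const_smul u).comp continuous_subtype_val).subtype_mk _⟩

def weightHom (χ : Fin m → ℕ) : Circle →* (Fin m → Circle) :=
  MonoidHom.pi fun i => powMonoidHom (χ i)

lemma wRel_iff {χ : Fin m → ℕ} {z w : Sph m} :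
    wRel m χ z w ↔ ∃ t : Circle, w = weightHom χ t • z := by
  constructor
  · rintro ⟨t, ht, h⟩
    exact ⟨⟨t, mem_sphere_zero_iff_norm.2 ht⟩, Subtype.ext (funext h)⟩
  · rintro ⟨t, rfl⟩
    exact ⟨t, t.norm_coe, fun i => rfl⟩

lemma wRel_equivalence (χ : Fin m → ℕ) : Equivalence (wRel m χ) where
  refl z := wRel_iff.2 ⟨1, by rw [map_one, one_smul]⟩
  symm h := by
    obtain ⟨t, rfl⟩ := wRel_iff.1 h
    exact wRel_iff.2 ⟨t⁻¹, by rw [map_inv, inv_smul_smul]⟩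
  trans h h' := by
    obtain ⟨t, rfl⟩ := wRel_iff.1 h
    obtain ⟨t', rfl⟩ := wRel_iff.1 h'
    exact wRel_iff.2 ⟨t' * t, by rw [map_mul, mul_smul]⟩

lemma wpMk_eq_wpMk_iff {χ : Fin m → ℕ} {z w : Sph m} :
    wpMk m χ z = wpMk m χ w ↔ wRel m χ z w :=
  Quot.eq.trans (wRel_equivalence χ).eqvGen_iff

lemma wRel.smul {χ : Fin m → ℕ} {z w : Sph m} (u : Fin m → Circle) (h : wRel m χ z w) :
    wRel m χ (u • z) (u • w) := by
  obtain ⟨t, rfl⟩ := wRel_iff.1 h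
  exact wRel_iff.2 ⟨t, by rw [← mul_smul, mul_comm, mul_smul]⟩

instance (χ : Fin m → ℕ) : MulAction (Fin m → Circle) (WP m χ) where
  smul u := Quot.map (u • ·) fun _ _ => wRel.smul u
  one_smul := Quot.ind fun z => congrArg (Quot.mk _) (one_smul _ z)
  mul_smul u v := Quot.ind fun z => congrArg (Quot.mk _) (mul_smul u v z)

instance (χ : Fin m → ℕ) : ContinuousConstSMul (Fin m → Circle) (WP m χ) :=
  ⟨fun u => continuous_quot_lift _ (continuous_quot_mk.comp (continuous_const_smul u))⟩

def sumSq (v : Fin m → ℂ) : ℝ := ∑ i, ‖v i‖ ^ 2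

lemma sumSq_pos {v : Fin m → ℂ} (hv : v ≠ 0) : 0 < sumSq v := by
  obtain ⟨i, hi⟩ := Function.ne_iff.1 hv
  exact Finset.sum_pos' (fun j _ => by positivity)
    ⟨i, Finset.mem_univ i, pow_pos (norm_pos_iff.2 hi) 2⟩

lemma sumSq_smul (c : ℝ) (v : Fin m → ℂ) : sumSq (c • v) = c ^ 2 * sumSq v := by
  simp only [sumSq, Pi.smul_apply, norm_smul, Real.norm_eq_abs, mul_pow, sq_abs, Finset.mul_sum]

lemma sumSq_circle_smul (u : Fin m → Circle) (v : Fin m → ℂ) : sumSq (u • v) = sumSq v := by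
  simp only [sumSq, Pi.smul_apply', Circle.norm_smul]

def normalizeVec (v : Fin m → ℂ) : Fin m → ℂ := (√(sumSq v))⁻¹ • v

lemma sumSq_normalizeVec {v : Fin m → ℂ} (hv : v ≠ 0) : sumSq (normalizeVec v) = 1 := by
  rw [normalizeVec, sumSq_smul, inv_pow, Real.sq_sqrt (sumSq_pos hv).le,
    inv_mul_cancel₀ (sumSq_pos hv).ne']

lemma normalizeVec_of_sumSq_eq_one {v : Fin m → ℂ} (hv : sumSq v = 1) : normalizeVec v = v := by
  rw [normalizeVec, hv, Real.sqrt_one, inv_one, one_smul]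

lemma normalizeVec_smul {c : ℝ} (hc : 0 < c) (v : Fin m → ℂ) :
    normalizeVec (c • v) = normalizeVec v := by
  rw [normalizeVec, normalizeVec, sumSq_smul, Real.sqrt_mul (sq_nonneg c), Real.sqrt_sq hc.le,
    smul_smul, mul_inv_rev, inv_mul_cancel_right₀ hc.ne']

lemma normalizeVec_circle_smul (u : Fin m → Circle) (v : Fin m → ℂ) :
    normalizeVec (u • v) = u • normalizeVec v := by
  rw [normalizeVec, normalizeVec, sumSq_circle_smul, smul_comm]

lemma exists_pos_smul_eq_of_normalizeVec_eq {v w : Fin m → ℂ} (hv : v ≠ 0) (hw : w ≠ 0)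
    (h : normalizeVec v = normalizeVec w) : ∃ c : ℝ, 0 < c ∧ v = c • w := by
  have hSv := sumSq_pos hv
  refine ⟨√(sumSq v) * (√(sumSq w))⁻¹, ?_, ?_⟩
  · have := sumSq_pos hw
    positivity
  · rw [mul_smul, ← normalizeVec, ← h, normalizeVec, smul_inv_smul₀ (Real.sqrt_pos.2 hSv).ne']

lemma powVec_ne_zero (d : Fin m → ℕ) (z : Sph m) : powVec m d z ≠ 0 := by
  obtain ⟨i, hi⟩ := z.exists_ne_zero
  exact Function.ne_iff.2 ⟨i, pow_ne_zero _ hi⟩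

lemma powVec_smul (d : Fin m → ℕ) (u : Fin m → Circle) (z : Sph m) :
    powVec m d (u • z) = (fun i => u i ^ d i) • powVec m d z := by
  ext i
  simp [powVec, Sph.coe_smul, Circle.smul_def, mul_pow]

def powSph (d : Fin m → ℕ) (z : Sph m) : Sph m :=
  ⟨normalizeVec (powVec m d z), sumSq_normalizeVec (powVec_ne_zero d z)⟩

lemma coe_powSph (d : Fin m → ℕ) (z : Sph m) :
    (powSph d z : Fin m → ℂ) = normalizeVec (powVec m d z) := rfl

lemma continuous_powSph (d : Fin m → ℕ) : Continuous (powSph d) := by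
  have hpow : Continuous (powVec m d) :=
    continuous_pi fun i => ((continuous_apply i).comp continuous_subtype_val).pow _
  have hsumSq : Continuous (sumSq (m := m)) := by unfold sumSq; fun_prop
  have hscale : Continuous fun z => (√(sumSq (powVec m d z)))⁻¹ :=
    (hsumSq.comp hpow).sqrt.inv₀ fun z => (Real.sqrt_pos.2 (sumSq_pos (powVec_ne_zero d z))).ne'
  exact (hscale.smul hpow).subtype_mk _

lemma powSph_smul (d : Fin m → ℕ) (u : Fin m → Circle) (z : Sph m) :
    powSph d (u • z) = (fun i => u i ^ d i) • powSph d z :=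
  Subtype.ext <| by
    rw [Sph.coe_smul, coe_powSph, coe_powSph, powVec_smul, normalizeVec_circle_smul]

lemma exists_pos_sum_mul_pow_eq_one {ι : Type*} [Fintype ι] {c : ι → ℝ} {k : ι → ℕ}
    (hc : ∀ i, 0 ≤ c i) (hk : ∀ i, k i ≠ 0) {i₀ : ι} (hi₀ : 0 < c i₀) :
    ∃ r : ℝ, 0 < r ∧ ∑ i, c i * r ^ k i = 1 := by
  set f : ℝ → ℝ := fun r => ∑ i, c i * r ^ k i
  have hf0 : f 0 = 0 := by simp [f, zero_pow (hk _)]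
  have htends : Tendsto (fun r : ℝ => c i₀ * r ^ k i₀) atTop atTop :=
    (tendsto_pow_atTop (hk i₀)).const_mul_atTop hi₀
  obtain ⟨M, hM1, hM0⟩ := ((htends.eventually_ge_atTop 1).and (eventually_ge_atTop 0)).exists
  have hfM : 1 ≤ f M := hM1.trans <| Finset.single_le_sum (f := fun i => c i * M ^ k i)
    (fun i _ => mul_nonneg (hc i) (pow_nonneg hM0 _)) (Finset.mem_univ i₀)
  obtain ⟨r, hr, hfr⟩ := intermediate_value_Icc hM0 (by fun_prop : Continuous f).continuousOn
    ⟨hf0.le.trans zero_le_one, hfM⟩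
  refine ⟨r, hr.1.lt_of_ne ?_, hfr⟩
  rintro rfl
  simp [hf0] at hfr

lemma eq_one_of_norm_pow_eq_mul_of_le_one {z z' : Sph m} {d : Fin m → ℕ} (hd : ∀ i, d i ≠ 0)
    {c : ℝ} (hc : c ≤ 1)
    (h : ∀ i, ‖(z' : Fin m → ℂ) i‖ ^ d i = c * ‖(z : Fin m → ℂ) i‖ ^ d i) : c = 1 := by
  have hle : ∀ i, ‖(z' : Fin m → ℂ) i‖ ≤ ‖(z : Fin m → ℂ) i‖ := fun i =>
    (pow_le_pow_iff_left₀ (norm_nonneg _) (norm_nonneg _) (hd i)).1 <|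
      (h i).trans_le (mul_le_of_le_one_left (by positivity) hc)
  have heq : ∀ i, ‖(z' : Fin m → ℂ) i‖ = ‖(z : Fin m → ℂ) i‖ := fun i =>
    (sq_eq_sq₀ (norm_nonneg _) (norm_nonneg _)).1 <|
      (Finset.sum_eq_sum_iff_of_le fun i _ => pow_le_pow_left₀ (norm_nonneg _) (hle i) 2).1
        (z'.2.trans z.2.symm) i (Finset.mem_univ i)
  obtain ⟨i, hi⟩ := z.exists_ne_zero
  exact (mul_eq_right₀ (pow_ne_zero _ (norm_ne_zero_iff.2 hi))).1 (heq i ▸ h i).symm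

lemma eq_one_of_norm_pow_eq_mul {z z' : Sph m} {d : Fin m → ℕ} (hd : ∀ i, d i ≠ 0)
    {c : ℝ} (hc : 0 < c)
    (h : ∀ i, ‖(z' : Fin m → ℂ) i‖ ^ d i = c * ‖(z : Fin m → ℂ) i‖ ^ d i) : c = 1 := by
  rcases le_total c 1 with hc1 | hc1
  · exact eq_one_of_norm_pow_eq_mul_of_le_one hd hc1 h
  · refine inv_eq_one.1 <| eq_one_of_norm_pow_eq_mul_of_le_one (z := z') (z' := z) hd
      (inv_le_one_of_one_le₀ hc1) fun i => ?_
    rw [h i, inv_mul_cancel_left₀ hc.ne']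

lemma exists_rootsOfUnity_mul_eq {n : ℕ} [NeZero n] {a b : ℂ} (h : a ^ n = b ^ n) :
    ∃ ζ : rootsOfUnity n ℂ, a = ((ζ : ℂˣ) : ℂ) * b := by
  by_cases hb : b = 0
  · refine ⟨1, ?_⟩
    rw [hb, zero_pow (NeZero.ne n), pow_eq_zero_iff (NeZero.ne n)] at h
    rw [h, hb, mul_zero]
  · refine ⟨rootsOfUnity.mkOfPowEq (a / b) ?_, ?_⟩
    · rw [div_pow, h, div_self (pow_ne_zero _ hb)]
    · rw [rootsOfUnity.coe_mkOfPowEq, div_mul_cancel₀ _ hb]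

lemma Circle.exists_pow_eq {n : ℕ} (hn : n ≠ 0) (t : Circle) : ∃ τ : Circle, τ ^ n = t := by
  obtain ⟨θ, rfl⟩ := Circle.exp_surjective t
  refine ⟨Circle.exp (θ / n), ?_⟩
  rw [← Circle.exp_natCast_mul, mul_div_cancel₀ _ (Nat.cast_ne_zero.2 hn)]

lemma powSph_surjective {d : Fin m → ℕ} (hd : ∀ i, d i ≠ 0) : Surjective (powSph d) := by
  intro w
  choose v hv using fun i =>
    IsAlgClosed.exists_pow_nat_eq ((w : Fin m → ℂ) i) (Nat.pos_of_ne_zero (hd i))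
  obtain ⟨i₀, hi₀⟩ := w.exists_ne_zero
  have hvi₀ : v i₀ ≠ 0 := fun h => hi₀ (by rw [← hv, h, zero_pow (hd i₀)])
  -- `e i * d i = ∏ j, d j`, so scaling each `v i` by `r ^ e i` scales every `v i ^ d i` by the
  -- same factor `r ^ ∏ j, d j`
  set e : Fin m → ℕ := fun i => ∏ j ∈ Finset.univ.erase i, d j
  have he : ∀ i, e i * d i = ∏ j, d j := fun i => Finset.prod_erase_mul _ _ (Finset.mem_univ i)
  obtain ⟨r, hr, hsum⟩ := exists_pos_sum_mul_pow_eq_one (c := fun i => ‖v i‖ ^ 2)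
    (k := fun i => 2 * e i) (fun i => by positivity)
    (fun i => mul_ne_zero two_ne_zero (Finset.prod_ne_zero_iff.2 fun j _ => hd j))
    (pow_pos (norm_pos_iff.2 hvi₀) 2)
  let z : Sph m := ⟨fun i => ((r ^ e i : ℝ) : ℂ) * v i, by
    rw [← hsum]
    refine Finset.sum_congr rfl fun i _ => ?_
    rw [norm_mul, Complex.norm_real, Real.norm_of_nonneg (by positivity), mul_pow, ← pow_mul,
      mul_comm, mul_comm 2]⟩
  have hz : powVec m d z = (r ^ ∏ j, d j) • (w : Fin m → ℂ) := by
    ext i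
    simp only [powVec, z, Pi.smul_apply, Complex.real_smul, mul_pow, hv, ← Complex.ofReal_pow,
      ← pow_mul, he]
  exact ⟨z, Subtype.ext <| by rw [coe_powSph, hz, normalizeVec_smul (by positivity),
    normalizeVec_of_sumSq_eq_one w.2]⟩

section RootsOfUnity

variable (d : Fin m → ℕ) [∀ i, NeZero (d i)]

def rootsToCircle : (∀ i, rootsOfUnity (d i) ℂ) →* (Fin m → Circle) :=
  MonoidHom.piMap fun i => rootsOfUnitytoCircle (d i)

lemma rootsToCircle_pow (g : ∀ i, rootsOfUnity (d i) ℂ) :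
    (fun i => rootsToCircle d g i ^ d i) = 1 :=
  funext fun i => Circle.ext <| by
    rw [Circle.coe_pow, Pi.one_apply, Circle.coe_one]
    exact (mem_rootsOfUnity' _ _).1 (g i).2

variable {d}

lemma powSph_eq_powSph_iff {z z' : Sph m} :
    powSph d z = powSph d z' ↔ ∃ g, z' = rootsToCircle d g • z := by
  constructor
  · intro h
    obtain ⟨c, hc, hcz⟩ := exists_pos_smul_eq_of_normalizeVec_eq (powVec_ne_zero d z')
      (powVec_ne_zero d z) (congrArg Subtype.val h).symm
    have hnorm : ∀ i, ‖(z' : Fin m → ℂ) i‖ ^ d i = c * ‖(z : Fin m → ℂ) i‖ ^ d i := fun i => by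
      simpa [powVec, norm_smul, Real.norm_of_nonneg hc.le] using congrArg norm (congrFun hcz i)
    rw [eq_one_of_norm_pow_eq_mul (fun i => NeZero.ne (d i)) hc hnorm, one_smul] at hcz
    choose g hg using fun i => exists_rootsOfUnity_mul_eq (congrFun hcz i)
    exact ⟨g, Subtype.ext (funext hg)⟩
  · rintro ⟨g, rfl⟩
    rw [powSph_smul, rootsToCircle_pow, one_smul]

end RootsOfUnity

section Descent

variable {ω χ d : Fin m → ℕ} {s : ℕ}

lemma powSph_weightHom_smul (hds : ∀ i, ω i * d i = s * χ i) (t : Circle) (z : Sph m) :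
    powSph d (weightHom ω t • z) = weightHom χ (t ^ s) • powSph d z := by
  rw [powSph_smul]
  congr 1
  funext i
  simp only [weightHom, MonoidHom.pi_apply, powMonoidHom_apply, ← pow_mul, hds i]

lemma wRel.powSph (hds : ∀ i, ω i * d i = s * χ i) {z w : Sph m} (h : wRel m ω z w) :
    wRel m χ (powSph d z) (powSph d w) := by
  obtain ⟨t, rfl⟩ := wRel_iff.1 h
  exact wRel_iff.2 ⟨t ^ s, powSph_weightHom_smul hds t z⟩

lemma exists_wRel_rootsToCircle_smul [∀ i, NeZero (d i)] (hds : ∀ i, ω i * d i = s * χ i)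
    (hs : s ≠ 0) {z z' : Sph m} (h : wRel m χ (powSph d z) (powSph d z')) :
    ∃ g, wRel m ω (rootsToCircle d g • z) z' := by
  obtain ⟨t, ht⟩ := wRel_iff.1 h
  obtain ⟨τ, rfl⟩ := Circle.exists_pow_eq hs t
  rw [← powSph_weightHom_smul hds, eq_comm, powSph_eq_powSph_iff] at ht
  obtain ⟨g, rfl⟩ := ht
  exact ⟨g, wRel_iff.2 ⟨τ, by rw [← mul_smul, mul_comm, mul_smul]⟩⟩

lemma isQuotientMap_powSph [∀ i, NeZero (d i)] : IsQuotientMap (powSph d) :=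
  (continuous_powSph d).isClosedMap.isQuotientMap (continuous_powSph d)
    (powSph_surjective fun i => NeZero.ne (d i))

theorem nonempty_orbitSpace_homeomorph [∀ i, NeZero (d i)] (hds : ∀ i, ω i * d i = s * χ i)
    (hs : s ≠ 0) :
    Nonempty (Quot (fun x y : WP m ω => ∃ g, rootsToCircle d g • x = y) ≃ₜ WP m χ) := by
  let e : WP m ω → WP m χ := Quot.map (powSph d) fun _ _ => wRel.powSph hds
  have he : ∀ g x, e (rootsToCircle d g • x) = e x := fun g => Quot.ind fun z =>
    congrArg (Quot.mk _) (powSph_eq_powSph_iff.2 ⟨g, rfl⟩).symm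
  let F : Quot (fun x y : WP m ω => ∃ g, rootsToCircle d g • x = y) → WP m χ :=
    Quot.lift e (by rintro _ _ ⟨g, rfl⟩; exact (he g _).symm)
  let q : Sph m → Quot (fun x y : WP m ω => ∃ g, rootsToCircle d g • x = y) :=
    fun z => Quot.mk _ (Quot.mk _ z)
  have hq : IsQuotientMap q := isQuotientMap_quot_mk.comp isQuotientMap_quot_mk
  have hFq : IsQuotientMap (F ∘ q) := isQuotientMap_quot_mk.comp isQuotientMap_powSph
  have hF : Injective F := by
    rintro ⟨⟨z⟩⟩ ⟨⟨z'⟩⟩ h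
    obtain ⟨g, hg⟩ := exists_wRel_rootsToCircle_smul hds hs (wpMk_eq_wpMk_iff.1 h)
    apply Quot.sound
    exact ⟨g, Quot.sound hg⟩
  exact ⟨(isHomeomorph_iff_isQuotientMap_injective.2
    ⟨hq.of_comp_isQuotientMap hFq, hF⟩).homeomorph⟩

end Descent

lemma sVal_spec {χ ω : Fin m → ℕ} (hω : ∀ i, 1 ≤ ω i) :
    0 < sVal m χ ω ∧ ∀ i, ω i ∣ sVal m χ ω * χ i :=
  Nat.sInf_mem (s := {s | 0 < s ∧ ∀ i, ω i ∣ s * χ i}) ⟨∏ i, ω i, Finset.prod_pos fun i _ => hω i,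
    fun i => (Finset.dvd_prod_of_mem ω (Finset.mem_univ i)).mul_right _⟩

lemma mul_dExp {χ ω : Fin m → ℕ} (hω : ∀ i, 1 ≤ ω i) (i : Fin m) :
    ω i * dExp m χ ω i = sVal m χ ω * χ i :=
  Nat.mul_div_cancel' ((sVal_spec hω).2 i)

lemma dExp_ne_zero {χ ω : Fin m → ℕ} (hω : ∀ i, 1 ≤ ω i) (hχ : ∀ i, 1 ≤ χ i) (i : Fin m) :
    dExp m χ ω i ≠ 0 := fun h =>
  (Nat.mul_pos (sVal_spec hω).1 (hχ i)).ne' (by rw [← mul_dExp hω i, h, mul_zero])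

theorem statement2_general (n : ℕ) (ω χ : Fin (n + 1) → ℕ)
    (hω : ∀ i, 1 ≤ ω i) (hχ : ∀ i, 1 ≤ χ i) :
    ∃ (G : Type) (i1 : CommGroup G) (i2 : Fintype G),
      @FiniteGroupQuotientHomeo G i1 i2 (WP (n + 1) ω) (WP (n + 1) χ)
        inferInstance inferInstance := by
  have : ∀ i, NeZero (dExp (n + 1) χ ω i) := fun i => ⟨dExp_ne_zero hω hχ i⟩
  exact ⟨∀ i, rootsOfUnity (dExp (n + 1) χ ω i) ℂ, inferInstance, Fintype.ofFinite _,
    fun g x => rootsToCircle _ g • x, fun x => by simp only [map_one, one_smul],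
    fun g h x => by simp only [map_mul, mul_smul], fun g => continuous_const_smul _,
    nonempty_orbitSpace_homeomorph (mul_dExp hω) (sVal_spec hω).1.ne'⟩

/-- Any weighted projective space `P(χ)` arises as the orbit space of any
other weighted projective space `P(ω)` of the same dimension under a continuous action of a
finite abelian group. -/
theorem statement2 (n : ℕ) (hn : 1 ≤ n) (ω χ : Fin (n + 1) → ℕ)
    (hω : ∀ i, 1 ≤ ω i) (hχ : ∀ i, 1 ≤ χ i) :
    ∃ (G : Type) (i1 : CommGroup G) (i2 : Fintype G),
      @FiniteGroupQuotientHomeo G i1 i2 (WP (n + 1) ω) (WP (n + 1) χ)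
        inferInstance inferInstance :=
  statement2_general n ω χ hω hχ
end
end

section
/- Let σ and σ' be coprime weight vectors, with coordinatewise product σσ'. Then the map f : P(σσ') → P(σ') × P(σ) given by f(w) = (e(σ'/σσ')(w), e(σ/σσ')(w)) is a homeomorphism onto the subspace P = {(z', z) ∈ P(σ') × P(σ) : e(1/σ')(z') = e(1/σ)(z) in ℂP^n}, equipped with the subspace topology of the product. In other words, the commutative square formed by e(σ'/σσ'), e(σ/σσ'), e(1/σ'), e(1/σ) is a pullback square of topological spaces. -/
noncomputable section

/-!
On the sphere, two points related by a weighted scaling `c ·_χ` must have `‖c‖ = 1`, so the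
circle may be replaced by `ℂˣ`: `[z]_χ = [w]_χ` iff `w = c ·_χ z` for some `c ≠ 0`, and
`e(χ/ω) [z] = [w]` iff `z^d = c ·_χ w`. For coprime `σ, σ'` the integers `L = lcm σ` and
`L' = lcm σ'` are coprime, say `L x + L' y = 1`. If `w^{L/σ}` and `w^{L'/σ'}` are known up to
`·_{σ'}` and `·_σ`, Bezout recovers `w` up to `·_{σσ'}`, which is injectivity; conversely a pair
`(z', z)` with `z^{L/σ} = c z'^{L'/σ'}` is hit by the class of `z'^{xσ} z^{yσ'}`. A continuous
bijection from the compact space `P(σσ')` onto a Hausdorff space is a homeomorphism.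
-/

section

variable {K : Type*} [Field K]

lemma eq_zpow_pow_mul_of_pow_eq {v w a b : K} {k k' d d' L L' : ℕ} {x y : ℤ}
    (ha : a ≠ 0) (hd : d ≠ 0) (hL : k * d = L) (hL' : k' * d' = L')
    (hxy : (L : ℤ) * x + L' * y = 1)
    (h : v ^ d = a ^ k' * w ^ d) (h' : v ^ d' = b ^ k * w ^ d') :
    v = (a ^ x * b ^ y) ^ (k * k') * w := by
  by_cases hw : w = 0
  · rw [hw, zero_pow hd, mul_zero, pow_eq_zero_iff hd] at h
    rw [h, hw, mul_zero]
  obtain ⟨r, rfl⟩ : ∃ r, v = r * w := ⟨v / w, (div_mul_cancel₀ v hw).symm⟩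
  rw [mul_pow] at h h'
  have hr : r ^ d = a ^ k' := mul_right_cancel₀ (pow_ne_zero _ hw) h
  have hr' : r ^ d' = b ^ k := mul_right_cancel₀ (pow_ne_zero _ hw) h'
  have hr0 : r ≠ 0 := by
    rintro rfl
    exact pow_ne_zero _ ha (hr.symm.trans (zero_pow hd))
  congr 1
  calc r = r ^ ((L : ℤ) * x + L' * y) := by rw [hxy, zpow_one]
    _ = ((r ^ d) ^ x) ^ k * ((r ^ d') ^ y) ^ k' := by
      rw [zpow_add₀ hr0, ← hL, ← hL']
      simp only [← zpow_natCast, ← zpow_mul]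
      push_cast
      ring_nf
    _ = (a ^ x * b ^ y) ^ (k * k') := by
      rw [hr, hr']
      simp only [← zpow_natCast, ← zpow_mul, mul_zpow]
      push_cast
      ring_nf

lemma exists_pow_eq_mul_and_pow_eq_mul {z z' c : K} {k k' d d' L L' : ℕ} {x y : ℤ}
    (hc : c ≠ 0) (hd : d ≠ 0) (hd' : d' ≠ 0) (hL : k * d = L) (hL' : k' * d' = L')
    (hxy : (L : ℤ) * x + L' * y = 1) (h : z ^ d = c * z' ^ d') :
    ∃ u : K, u ^ d = (c ^ y) ^ k' * z' ∧ u ^ d' = (c⁻¹ ^ x) ^ k * z := by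
  by_cases hz' : z' = 0
  · rw [hz', zero_pow hd', mul_zero, pow_eq_zero_iff hd] at h
    exact ⟨0, by simp [hz', hd], by simp [h, hd']⟩
  have hz : z ≠ 0 := fun hz => by
    rw [hz, zero_pow hd] at h
    exact mul_ne_zero hc (pow_ne_zero _ hz') h.symm
  have h₂ : z' ^ d' = c⁻¹ * z ^ d := by rw [h, inv_mul_cancel_left₀ hc]
  refine ⟨z' ^ (x * k) * z ^ (y * k'), ?_, ?_⟩
  · calc (z' ^ (x * k) * z ^ (y * k')) ^ d = z' ^ (x * (k * d : ℕ)) * (z ^ d) ^ (y * k') := by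
          simp only [← zpow_natCast, ← zpow_mul, mul_zpow]
          push_cast
          ring_nf
      _ = (c ^ y) ^ k' * z' ^ ((L : ℤ) * x + L' * y) := by
          rw [h, mul_zpow, zpow_add₀ hz', hL, ← hL']
          simp only [← zpow_natCast, ← zpow_mul]
          push_cast
          ring_nf
      _ = (c ^ y) ^ k' * z' := by rw [hxy, zpow_one]
  · calc (z' ^ (x * k) * z ^ (y * k')) ^ d' = (z' ^ d') ^ (x * k) * z ^ (y * (k' * d' : ℕ)) := by
          simp only [← zpow_natCast, ← zpow_mul, mul_zpow]
          push_cast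
          ring_nf
      _ = (c⁻¹ ^ x) ^ k * z ^ ((L : ℤ) * x + L' * y) := by
          rw [h₂, mul_zpow, zpow_add₀ hz, ← hL, hL']
          simp only [← zpow_natCast, ← zpow_mul]
          push_cast
          ring_nf
      _ = (c⁻¹ ^ x) ^ k * z := by rw [hxy, zpow_one]

end

namespace WeightedProjective

open Finset

variable {m : ℕ}

lemma Sph.exists_ne_zero (z : Sph m) : ∃ i, z.1 i ≠ 0 := by
  by_contra! h
  simpa [h] using z.2

lemma Sph.norm_eq_of_forall_norm_le {v w : Sph m} (h : ∀ i, ‖v.1 i‖ ≤ ‖w.1 i‖) (i : Fin m) :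
    ‖v.1 i‖ = ‖w.1 i‖ := by
  by_contra hne
  have := sum_lt_sum (fun j _ => pow_le_pow_left₀ (norm_nonneg _) (h j) 2)
    ⟨i, mem_univ i, pow_lt_pow_left₀ ((h i).lt_of_ne hne) (norm_nonneg _) two_ne_zero⟩
  rw [v.2, w.2] at this
  exact this.false

lemma Sph.eq_one_of_le_one {χ e : Fin m → ℕ} (hχ : ∀ i, χ i ≠ 0) (he : ∀ i, e i ≠ 0)
    {v w : Sph m} {a : ℝ} (ha₀ : 0 ≤ a) (ha₁ : a ≤ 1)
    (h : ∀ i, ‖v.1 i‖ ^ e i = a ^ χ i * ‖w.1 i‖ ^ e i) : a = 1 := by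
  have hle (i : Fin m) : ‖v.1 i‖ ≤ ‖w.1 i‖ :=
    (pow_le_pow_iff_left₀ (norm_nonneg _) (norm_nonneg _) (he i)).1 <| by
      rw [h i]
      exact mul_le_of_le_one_left (by positivity) (pow_le_one₀ ha₀ ha₁)
  obtain ⟨i, hi⟩ := Sph.exists_ne_zero w
  have hwi := h i
  rw [Sph.norm_eq_of_forall_norm_le hle i] at hwi
  have : a ^ χ i = 1 :=
    (mul_eq_right₀ (pow_ne_zero _ (norm_ne_zero_iff.2 hi))).1 hwi.symm
  exact (pow_eq_one_iff_of_nonneg ha₀ (hχ i)).1 this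

lemma Sph.norm_eq_one_of_pow_eq {χ e : Fin m → ℕ} (hχ : ∀ i, χ i ≠ 0) (he : ∀ i, e i ≠ 0)
    {v w : Sph m} {c : ℂ} (h : ∀ i, v.1 i ^ e i = c ^ χ i * w.1 i ^ e i) : ‖c‖ = 1 := by
  have hn (i : Fin m) : ‖v.1 i‖ ^ e i = ‖c‖ ^ χ i * ‖w.1 i‖ ^ e i := by
    simpa only [norm_mul, norm_pow] using congrArg norm (h i)
  rcases le_total ‖c‖ 1 with hc | hc
  · exact Sph.eq_one_of_le_one hχ he (norm_nonneg c) hc hn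
  · have hc₀ : ‖c‖ ≠ 0 := (zero_lt_one.trans_le hc).ne'
    refine inv_eq_one.1 (Sph.eq_one_of_le_one hχ he (v := w) (w := v) (by positivity)
      (inv_le_one_of_one_le₀ hc) fun i => ?_)
    rw [hn i, inv_pow, inv_mul_cancel_left₀ (pow_ne_zero _ hc₀)]

lemma wRel_equivalence (χ : Fin m → ℕ) : Equivalence (wRel m χ) where
  refl _ := ⟨1, norm_one, fun _ => by rw [one_pow, one_mul]⟩
  symm := by
    rintro z w ⟨t, ht, h⟩
    have ht₀ : t ≠ 0 := norm_ne_zero_iff.1 (ht ▸ one_ne_zero)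
    exact ⟨t⁻¹, by rw [norm_inv, ht, inv_one], fun i => by
      rw [h i, inv_pow, inv_mul_cancel_left₀ (pow_ne_zero _ ht₀)]⟩
  trans := by
    rintro z w u ⟨t, ht, h⟩ ⟨s, hs, h'⟩
    exact ⟨s * t, by rw [norm_mul, ht, hs, one_mul], fun i => by rw [h' i, h i, mul_pow, mul_assoc]⟩

lemma wpMk_eq_wpMk_iff_wRel {χ : Fin m → ℕ} {z w : Sph m} :
    wpMk m χ z = wpMk m χ w ↔ wRel m χ z w := by
  rw [wpMk, wpMk, Quot.eq, Equivalence.eqvGen_iff (wRel_equivalence χ)]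

lemma wpMk_eq_wpMk_iff {χ : Fin m → ℕ} (hχ : ∀ i, χ i ≠ 0) {z w : Sph m} :
    wpMk m χ z = wpMk m χ w ↔ ∃ c : ℂ, c ≠ 0 ∧ ∀ i, w.1 i = c ^ χ i * z.1 i := by
  rw [wpMk_eq_wpMk_iff_wRel]
  refine ⟨fun ⟨t, ht, h⟩ => ⟨t, norm_ne_zero_iff.1 (ht ▸ one_ne_zero), h⟩,
    fun ⟨c, _, h⟩ => ⟨c, ?_, h⟩⟩
  exact Sph.norm_eq_one_of_pow_eq hχ (e := fun _ => 1) (fun _ => one_ne_zero)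
    fun i => by simpa only [pow_one] using h i

lemma exists_wpMk_eq {χ : Fin m → ℕ} (p : WP m χ) : ∃ z, wpMk m χ z = p :=
  Quot.exists_rep p

lemma exists_isNorm {χ : Fin m → ℕ} (hχ : ∀ i, χ i ≠ 0) {v : Fin m → ℂ} (hv : ∃ i, v i ≠ 0) :
    ∃ w, IsNorm m χ v w := by
  obtain ⟨i₀, hi₀⟩ := hv
  set g : ℝ → ℝ := fun l => ∑ i, ‖(l : ℂ) ^ χ i * v i‖ ^ 2
  have hg : Continuous g := by fun_prop
  have hg₀ : g 0 = 0 := by simp [g, hχ]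
  set M : ℝ := max 1 ‖v i₀‖⁻¹
  have hM : 0 ≤ M := zero_le_one.trans (le_max_left _ _)
  have hgM : 1 ≤ g M := by
    have hv₀ : 0 < ‖v i₀‖ := norm_pos_iff.2 hi₀
    have hMv : 1 ≤ M ^ χ i₀ * ‖v i₀‖ :=
      calc 1 = ‖v i₀‖⁻¹ * ‖v i₀‖ := (inv_mul_cancel₀ hv₀.ne').symm
        _ ≤ M ^ χ i₀ * ‖v i₀‖ := by
          gcongr
          exact (le_max_right _ _).trans (le_self_pow₀ (le_max_left _ _) (hχ i₀))
    calc 1 ≤ ‖(M : ℂ) ^ χ i₀ * v i₀‖ ^ 2 := by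
          rw [norm_mul, norm_pow, Complex.norm_real, Real.norm_of_nonneg hM]
          nlinarith
      _ ≤ g M := single_le_sum (f := fun i => ‖(M : ℂ) ^ χ i * v i‖ ^ 2)
          (fun _ _ => sq_nonneg _) (mem_univ i₀)
  obtain ⟨l, hl, hgl⟩ := intermediate_value_Icc hM hg.continuousOn ⟨hg₀.le.trans zero_le_one, hgM⟩
  have hl₀ : 0 < l := hl.1.lt_of_ne fun h => by simp [← h, hg₀] at hgl
  exact ⟨⟨fun i => (l : ℂ) ^ χ i * v i, hgl⟩, l, hl₀, fun _ => rfl⟩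

def wsmul (χ : Fin m → ℕ) (t : Circle) (z : Sph m) : Sph m :=
  ⟨fun i => (t : ℂ) ^ χ i * z.1 i, by simpa [norm_mul, norm_pow, Circle.norm_coe] using z.2⟩

lemma continuous_wsmul (χ : Fin m → ℕ) : Continuous fun p : Circle × Sph m => wsmul χ p.1 p.2 :=
  .subtype_mk (continuous_pi fun i => ((continuous_subtype_val.comp continuous_fst).pow _).mul
    ((continuous_apply i).comp (continuous_subtype_val.comp continuous_snd))) _

lemma wsmul_inv_wsmul (χ : Fin m → ℕ) (t : Circle) (z : Sph m) :
    wsmul χ t⁻¹ (wsmul χ t z) = z :=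
  Subtype.ext <| funext fun i => by
    simp [wsmul, Circle.coe_inv, inv_pow]

lemma wRel_iff_exists_wsmul {χ : Fin m → ℕ} {z w : Sph m} :
    wRel m χ z w ↔ ∃ t : Circle, wsmul χ t z = w :=
  ⟨fun ⟨t, ht, h⟩ => ⟨⟨t, mem_sphere_zero_iff_norm.2 ht⟩, Subtype.ext (funext fun i => (h i).symm)⟩,
    fun ⟨t, h⟩ => ⟨t, t.norm_coe, fun i => by rw [← h]; rfl⟩⟩

lemma isOpenQuotientMap_wpMk (χ : Fin m → ℕ) : IsOpenQuotientMap (wpMk m χ) := by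
  refine ⟨Quot.exists_rep, continuous_quot_mk, fun U hU => ?_⟩
  rw [← isQuotientMap_quot_mk.isOpen_preimage]
  have hsat : wpMk m χ ⁻¹' (wpMk m χ '' U) = ⋃ t : Circle, wsmul χ t⁻¹ ⁻¹' U := by
    ext z
    simp only [Set.mem_preimage, Set.mem_image, Set.mem_iUnion, wpMk_eq_wpMk_iff_wRel,
      wRel_iff_exists_wsmul]
    constructor
    · rintro ⟨u, hu, t, rfl⟩
      exact ⟨t, by rwa [wsmul_inv_wsmul]⟩
    · rintro ⟨t, hz⟩
      exact ⟨_, hz, t, by simpa using wsmul_inv_wsmul χ t⁻¹ z⟩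
  exact hsat ▸ isOpen_iUnion fun t =>
    hU.preimage ((continuous_wsmul χ).comp (Continuous.prodMk continuous_const continuous_id))

instance : CompactSpace (Sph m) := by
  refine isCompact_iff_compactSpace.1 (Metric.isCompact_of_isClosed_isBounded
    (isClosed_eq (by fun_prop) continuous_const) ((isBounded_iff_forall_norm_le).2 ⟨1, ?_⟩))
  rintro z (hz : ∑ i, ‖z i‖ ^ 2 = 1)
  refine (pi_norm_le_iff_of_nonneg zero_le_one).2 fun i => ?_
  have : ‖z i‖ ^ 2 ≤ 1 := hz ▸ single_le_sum (f := fun j => ‖z j‖ ^ 2)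
    (fun _ _ => sq_nonneg _) (mem_univ i)
  nlinarith [norm_nonneg (z i)]

instance (χ : Fin m → ℕ) : T2Space (WP m χ) := by
  rw [t2Space_iff_of_isOpenQuotientMap (isOpenQuotientMap_wpMk χ)]
  have : {p : Sph m × Sph m | wpMk m χ p.1 = wpMk m χ p.2} =
      Set.range fun p : Circle × Sph m => (p.2, wsmul χ p.1 p.2) := by
    ext ⟨z, w⟩
    simp [wpMk_eq_wpMk_iff_wRel, wRel_iff_exists_wsmul]
  exact this ▸ (isCompact_range (continuous_snd.prodMk (continuous_wsmul χ))).isClosed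

section Exponents

variable {χ ω σ σ' : Fin m → ℕ}

lemma sVal_pos_and_dvd (hω : ∀ i, ω i ≠ 0) :
    0 < sVal m χ ω ∧ ∀ i, ω i ∣ sVal m χ ω * χ i :=
  Nat.sInf_mem (s := {s | 0 < s ∧ ∀ i, ω i ∣ s * χ i})
    ⟨∏ i, ω i, prod_pos fun i _ => Nat.pos_of_ne_zero (hω i),
      fun i => dvd_mul_of_dvd_left (dvd_prod_of_mem ω (mem_univ i)) _⟩

lemma mul_dExp (hω : ∀ i, ω i ≠ 0) (i : Fin m) : ω i * dExp m χ ω i = sVal m χ ω * χ i :=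
  Nat.mul_div_cancel' ((sVal_pos_and_dvd hω).2 i)

lemma mul_dExp_one (hσ : ∀ i, σ i ≠ 0) (i : Fin m) :
    σ i * dExp m (fun _ => 1) σ i = sVal m (fun _ => 1) σ :=
  (mul_dExp hσ i).trans (mul_one _)

lemma dExp_one_ne_zero (hσ : ∀ i, σ i ≠ 0) (i : Fin m) : dExp m (fun _ => 1) σ i ≠ 0 :=
  right_ne_zero_of_mul ((mul_dExp_one hσ i).trans_ne (sVal_pos_and_dvd hσ).1.ne')

lemma sVal_one_eq_lcm (hσ : ∀ i, σ i ≠ 0) : sVal m (fun _ => 1) σ = univ.lcm σ := by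
  have hdvd (s : ℕ) : (∀ i, σ i ∣ s * 1) ↔ univ.lcm σ ∣ s := by
    simp only [mul_one, Finset.lcm_dvd_iff, mem_univ, true_implies]
  have hmem := sVal_pos_and_dvd (χ := fun _ => 1) hσ
  refine le_antisymm (Nat.sInf_le ⟨Nat.pos_of_ne_zero ?_, (hdvd _).2 dvd_rfl⟩)
    (Nat.le_of_dvd hmem.1 ((hdvd _).1 hmem.2))
  simpa [Finset.lcm_eq_zero_iff] using hσ

lemma coprime_sVal_one (hσ : ∀ i, σ i ≠ 0) (hσ' : ∀ i, σ' i ≠ 0)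
    (hcop : ∀ i j, Nat.Coprime (σ i) (σ' j)) :
    Nat.Coprime (sVal m (fun _ => 1) σ) (sVal m (fun _ => 1) σ') := by
  rw [sVal_one_eq_lcm hσ, sVal_one_eq_lcm hσ']
  exact ((Nat.Coprime.prod_left fun i _ => Nat.Coprime.prod_right fun j _ => hcop i j)
    |>.coprime_dvd_left (lcm_dvd_prod _ _)).coprime_dvd_right (lcm_dvd_prod _ _)

lemma sVal_mul_right (hσ' : ∀ i, σ' i ≠ 0) :
    sVal m σ' (fun i => σ i * σ' i) = sVal m (fun _ => 1) σ := by
  simp only [sVal, mul_one, Nat.mul_dvd_mul_iff_right (Nat.pos_of_ne_zero (hσ' _))]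

lemma dExp_mul_right (hσ' : ∀ i, σ' i ≠ 0) (i : Fin m) :
    dExp m σ' (fun i => σ i * σ' i) i = dExp m (fun _ => 1) σ i := by
  rw [dExp, dExp, sVal_mul_right hσ', mul_one]
  exact Nat.mul_div_mul_right _ _ (Nat.pos_of_ne_zero (hσ' i))

lemma dExp_mul_left (hσ : ∀ i, σ i ≠ 0) (i : Fin m) :
    dExp m σ (fun i => σ i * σ' i) i = dExp m (fun _ => 1) σ' i := by
  simp only [mul_comm (σ _) (σ' _)]
  exact dExp_mul_right hσ i

end Exponents

end WeightedProjective

open WeightedProjective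

namespace IsEMap

variable {m : ℕ} {χ ω ω' : Fin m → ℕ} {e : WP m ω → WP m χ}

lemma apply_wpMk_eq_iff (he : IsEMap m χ ω e) (hχ : ∀ i, χ i ≠ 0) (z w : Sph m) :
    e (wpMk m ω z) = wpMk m χ w ↔
      ∃ c : ℂ, c ≠ 0 ∧ ∀ i, z.1 i ^ dExp m χ ω i = c ^ χ i * w.1 i := by
  obtain ⟨i₀, hi₀⟩ := Sph.exists_ne_zero z
  obtain ⟨W, l, hl, hW⟩ := exists_isNorm hχ (v := powVec m (dExp m χ ω) z)
    ⟨i₀, pow_ne_zero _ hi₀⟩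
  have hl₀ : (l : ℂ) ≠ 0 := Complex.ofReal_ne_zero.2 hl.ne'
  rw [he.2 z W ⟨l, hl, hW⟩, wpMk_eq_wpMk_iff hχ]
  simp only [hW, powVec]
  constructor
  · rintro ⟨c, hc, h⟩
    refine ⟨(c * l)⁻¹, inv_ne_zero (mul_ne_zero hc hl₀), fun i => ?_⟩
    rw [h i, ← mul_assoc (c ^ χ i), ← mul_pow, inv_pow,
      inv_mul_cancel_left₀ (pow_ne_zero _ (mul_ne_zero hc hl₀))]
  · rintro ⟨c, hc, h⟩
    refine ⟨(l * c)⁻¹, inv_ne_zero (mul_ne_zero hl₀ hc), fun i => ?_⟩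
    rw [h i, ← mul_assoc ((l : ℂ) ^ χ i), ← mul_pow, inv_pow,
      inv_mul_cancel_left₀ (pow_ne_zero _ (mul_ne_zero hl₀ hc))]

lemma exists_pow_eq_of_apply_eq {e' : WP m ω' → WP m χ} (he : IsEMap m χ ω e)
    (he' : IsEMap m χ ω' e') (hχ : ∀ i, χ i ≠ 0) {z z' : Sph m}
    (h : e (wpMk m ω z) = e' (wpMk m ω' z')) :
    ∃ c : ℂ, c ≠ 0 ∧ ∀ i, z.1 i ^ dExp m χ ω i = c ^ χ i * z'.1 i ^ dExp m χ ω' i := by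
  obtain ⟨u, hu⟩ := exists_wpMk_eq (e' (wpMk m ω' z'))
  obtain ⟨c, hc, hz⟩ := (he.apply_wpMk_eq_iff hχ z u).1 (h.trans hu.symm)
  obtain ⟨c', hc', hz'⟩ := (he'.apply_wpMk_eq_iff hχ z' u).1 hu.symm
  refine ⟨c / c', div_ne_zero hc hc', fun i => ?_⟩
  rw [hz, hz', div_pow, ← mul_assoc, div_mul_cancel₀ _ (pow_ne_zero _ hc')]

lemma apply_wpMk_of_isNorm (he : IsEMap m χ ω e) (hχ : ∀ i, χ i ≠ 0) (hω : ∀ i, ω i ≠ 0)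
    {u : Fin m → ℂ} {W z : Sph m} (hW : IsNorm m ω u W) {c : ℂ} (hc : c ≠ 0)
    (hu : ∀ i, u i ^ dExp m χ ω i = c ^ χ i * z.1 i) : e (wpMk m ω W) = wpMk m χ z := by
  obtain ⟨κ, hκ, hWκ⟩ := hW
  refine (he.apply_wpMk_eq_iff hχ W z).2 ⟨(κ : ℂ) ^ sVal m χ ω * c,
    mul_ne_zero (pow_ne_zero _ (Complex.ofReal_ne_zero.2 hκ.ne')) hc, fun i => ?_⟩
  rw [hWκ, mul_pow, ← pow_mul, mul_dExp hω, hu, pow_mul, mul_pow, mul_assoc]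

lemma comp_apply_wpMk {q : WP m χ → WP m (fun _ => 1)} (he : IsEMap m χ ω e)
    (hq : IsEMap m (fun _ => 1) χ q) (hχ : ∀ i, χ i ≠ 0) (z : Sph m) :
    ∃ (u : Sph m) (c : ℂ), c ≠ 0 ∧ q (e (wpMk m ω z)) = wpMk m (fun _ => 1) u ∧
      ∀ i, z.1 i ^ (dExp m χ ω i * dExp m (fun _ => 1) χ i) = c * u.1 i := by
  obtain ⟨w, hw⟩ := exists_wpMk_eq (e (wpMk m ω z))
  obtain ⟨u, hu⟩ := exists_wpMk_eq (q (wpMk m χ w))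
  obtain ⟨c, hc, hzw⟩ := (he.apply_wpMk_eq_iff hχ z w).1 hw.symm
  obtain ⟨c', hc', hwu⟩ := (hq.apply_wpMk_eq_iff (fun _ => one_ne_zero) w u).1 hu.symm
  refine ⟨u, c ^ sVal m (fun _ => 1) χ * c', mul_ne_zero (pow_ne_zero _ hc) hc',
    by rw [← hw, hu], fun i => ?_⟩
  rw [pow_mul, hzw, mul_pow, ← pow_mul, mul_dExp hχ, hwu]
  ring

end IsEMap

namespace WeightedProjective

variable {m : ℕ} {σ σ' : Fin m → ℕ}
  {e₁ : WP m (fun i => σ i * σ' i) → WP m σ'} {e₂ : WP m (fun i => σ i * σ' i) → WP m σ}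
  {q' : WP m σ' → WP m (fun _ => 1)} {q : WP m σ → WP m (fun _ => 1)}

lemma pullback_comm (hσ : ∀ i, σ i ≠ 0) (hσ' : ∀ i, σ' i ≠ 0)
    (h₁ : IsEMap m σ' (fun i => σ i * σ' i) e₁) (h₂ : IsEMap m σ (fun i => σ i * σ' i) e₂)
    (hq' : IsEMap m (fun _ => 1) σ' q') (hq : IsEMap m (fun _ => 1) σ q)
    (p : WP m (fun i => σ i * σ' i)) : q' (e₁ p) = q (e₂ p) := by
  obtain ⟨z, rfl⟩ := exists_wpMk_eq p
  obtain ⟨u, c, hc, hu, hzu⟩ := h₁.comp_apply_wpMk hq' hσ' z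
  obtain ⟨v, c', hc', hv, hzv⟩ := h₂.comp_apply_wpMk hq hσ z
  rw [hu, hv, wpMk_eq_wpMk_iff fun _ => one_ne_zero]
  refine ⟨c'⁻¹ * c, mul_ne_zero (inv_ne_zero hc') hc, fun i => ?_⟩
  have hcuv : c' * v.1 i = c * u.1 i := by
    rw [← hzv i, ← hzu i, dExp_mul_right hσ', dExp_mul_left hσ, mul_comm]
  rw [pow_one, mul_assoc, ← hcuv, inv_mul_cancel_left₀ hc']

lemma pullback_injective (hσ : ∀ i, σ i ≠ 0) (hσ' : ∀ i, σ' i ≠ 0)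
    (hcop : ∀ i j, Nat.Coprime (σ i) (σ' j))
    (h₁ : IsEMap m σ' (fun i => σ i * σ' i) e₁) (h₂ : IsEMap m σ (fun i => σ i * σ' i) e₂)
    {p p' : WP m (fun i => σ i * σ' i)} (h₁p : e₁ p = e₁ p') (h₂p : e₂ p = e₂ p') : p = p' := by
  obtain ⟨w, rfl⟩ := exists_wpMk_eq p
  obtain ⟨v, rfl⟩ := exists_wpMk_eq p'
  obtain ⟨a, ha, hva⟩ := h₁.exists_pow_eq_of_apply_eq h₁ hσ' h₁p.symm
  obtain ⟨b, hb, hvb⟩ := h₂.exists_pow_eq_of_apply_eq h₂ hσ h₂p.symm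
  obtain ⟨x, y, hxy⟩ := Nat.isCoprime_iff_coprime.2 (coprime_sVal_one hσ hσ' hcop)
  rw [wpMk_eq_wpMk_iff fun i => mul_ne_zero (hσ i) (hσ' i)]
  refine ⟨a ^ x * b ^ y, mul_ne_zero (zpow_ne_zero _ ha) (zpow_ne_zero _ hb), fun i => ?_⟩
  refine eq_zpow_pow_mul_of_pow_eq ha (dExp_one_ne_zero hσ i) (mul_dExp_one hσ i)
    (mul_dExp_one hσ' i) (by linear_combination hxy) ?_ ?_
  · rw [← dExp_mul_right hσ']
    exact hva i
  · rw [← dExp_mul_left hσ]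
    exact hvb i

lemma pullback_exists_lift (hσ : ∀ i, σ i ≠ 0) (hσ' : ∀ i, σ' i ≠ 0)
    (hcop : ∀ i j, Nat.Coprime (σ i) (σ' j))
    (h₁ : IsEMap m σ' (fun i => σ i * σ' i) e₁) (h₂ : IsEMap m σ (fun i => σ i * σ' i) e₂)
    (hq' : IsEMap m (fun _ => 1) σ' q') (hq : IsEMap m (fun _ => 1) σ q)
    {a : WP m σ'} {b : WP m σ} (hab : q' a = q b) : ∃ p, e₁ p = a ∧ e₂ p = b := by
  obtain ⟨z', rfl⟩ := exists_wpMk_eq a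
  obtain ⟨z, rfl⟩ := exists_wpMk_eq b
  obtain ⟨c, hc, hzz'⟩ := hq.exists_pow_eq_of_apply_eq hq' (fun _ => one_ne_zero) hab.symm
  obtain ⟨x, y, hxy⟩ := Nat.isCoprime_iff_coprime.2 (coprime_sVal_one hσ hσ' hcop)
  choose u hu₁ hu₂ using fun i => exists_pow_eq_mul_and_pow_eq_mul (x := x) (y := y) hc
    (dExp_one_ne_zero hσ i) (dExp_one_ne_zero hσ' i) (mul_dExp_one hσ i) (mul_dExp_one hσ' i)
    (by linear_combination hxy) (by simpa only [pow_one] using hzz' i)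
  obtain ⟨i₀, hi₀⟩ := Sph.exists_ne_zero z
  have hu₀ : u i₀ ≠ 0 := fun h => by
    have := hu₂ i₀
    rw [h, zero_pow (dExp_one_ne_zero hσ' i₀)] at this
    exact mul_ne_zero (pow_ne_zero _ (zpow_ne_zero _ (inv_ne_zero hc))) hi₀ this.symm
  have hω (i : Fin m) : σ i * σ' i ≠ 0 := mul_ne_zero (hσ i) (hσ' i)
  obtain ⟨W, hW⟩ := exists_isNorm hω ⟨i₀, hu₀⟩
  refine ⟨wpMk _ _ W, h₁.apply_wpMk_of_isNorm hσ' hω hW (zpow_ne_zero y hc) fun i => ?_,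
    h₂.apply_wpMk_of_isNorm hσ hω hW (zpow_ne_zero x (inv_ne_zero hc)) fun i => ?_⟩
  · rw [dExp_mul_right hσ']
    exact hu₁ i
  · rw [dExp_mul_left hσ]
    exact hu₂ i

end WeightedProjective

open WeightedProjective

theorem statement8_general (n : ℕ) (σ σ' : Fin (n + 1) → ℕ)
    (hσ : ∀ i, 1 ≤ σ i) (hσ' : ∀ i, 1 ≤ σ' i)
    (hcop : ∀ i j, Nat.gcd (σ i) (σ' j) = 1)
    (e1 : WP (n + 1) (fun i => σ i * σ' i) → WP (n + 1) σ')
    (h1 : IsEMap (n + 1) σ' (fun i => σ i * σ' i) e1)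
    (e2 : WP (n + 1) (fun i => σ i * σ' i) → WP (n + 1) σ)
    (h2 : IsEMap (n + 1) σ (fun i => σ i * σ' i) e2)
    (q' : WP (n + 1) σ' → WP (n + 1) (fun _ => 1))
    (hq' : IsEMap (n + 1) (fun _ => 1) σ' q')
    (q : WP (n + 1) σ → WP (n + 1) (fun _ => 1))
    (hq : IsEMap (n + 1) (fun _ => 1) σ q) :
    ∃ F : WP (n + 1) (fun i => σ i * σ' i) ≃ₜ
        {p : WP (n + 1) σ' × WP (n + 1) σ // q' p.1 = q p.2},
      ∀ w, ((F w : WP (n + 1) σ' × WP (n + 1) σ)) = (e1 w, e2 w) := by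
  have hσ₀ (i : Fin (n + 1)) : σ i ≠ 0 := Nat.one_le_iff_ne_zero.1 (hσ i)
  have hσ'₀ (i : Fin (n + 1)) : σ' i ≠ 0 := Nat.one_le_iff_ne_zero.1 (hσ' i)
  let f (w : WP (n + 1) (fun i => σ i * σ' i)) :
      {p : WP (n + 1) σ' × WP (n + 1) σ // q' p.1 = q p.2} :=
    ⟨(e1 w, e2 w), pullback_comm hσ₀ hσ'₀ h1 h2 hq' hq w⟩
  have hf : Function.Bijective f := by
    refine ⟨fun p p' h => pullback_injective hσ₀ hσ'₀ hcop h1 h2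
      (congrArg (·.1.1) h) (congrArg (·.1.2) h), ?_⟩
    rintro ⟨⟨a, b⟩, hab⟩
    obtain ⟨p, rfl, rfl⟩ := pullback_exists_lift hσ₀ hσ'₀ hcop h1 h2 hq' hq hab
    exact ⟨p, rfl⟩
  have hfc : Continuous f := (h1.1.prodMk h2.1).subtype_mk _
  exact ⟨hfc.homeoOfEquivCompactToT2 (f := Equiv.ofBijective f hf), fun _ => rfl⟩

/-- For coprime weight vectors `σ, σ'` with coordinatewise product `σσ'`,
the map `w ↦ (e(σ'/σσ')(w), e(σ/σσ')(w))` is a homeomorphism of `P(σσ')` onto the subspace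
`{(z', z) ∈ P(σ') × P(σ) : e(1/σ')(z') = e(1/σ)(z)}`; i.e. the square of `e`-maps is a
pullback square of topological spaces. -/
theorem statement8 (n : ℕ) (hn : 1 ≤ n) (σ σ' : Fin (n + 1) → ℕ)
    (hσ : ∀ i, 1 ≤ σ i) (hσ' : ∀ i, 1 ≤ σ' i)
    (hcop : ∀ i j, Nat.gcd (σ i) (σ' j) = 1)
    (e1 : WP (n + 1) (fun i => σ i * σ' i) → WP (n + 1) σ')
    (h1 : IsEMap (n + 1) σ' (fun i => σ i * σ' i) e1)
    (e2 : WP (n + 1) (fun i => σ i * σ' i) → WP (n + 1) σ)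
    (h2 : IsEMap (n + 1) σ (fun i => σ i * σ' i) e2)
    (q' : WP (n + 1) σ' → WP (n + 1) (fun _ => 1))
    (hq' : IsEMap (n + 1) (fun _ => 1) σ' q')
    (q : WP (n + 1) σ → WP (n + 1) (fun _ => 1))
    (hq : IsEMap (n + 1) (fun _ => 1) σ q) :
    ∃ F : WP (n + 1) (fun i => σ i * σ' i) ≃ₜ
        {p : WP (n + 1) σ' × WP (n + 1) σ // q' p.1 = q p.2},
      ∀ w, ((F w : WP (n + 1) σ' × WP (n + 1) σ)) = (e1 w, e2 w) :=
  statement8_general n σ σ' hσ hσ' hcop e1 h1 e2 h2 q' hq' q hq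
end
end
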